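/- Under the assumptions of the previous statement (eigenfunction f of sgn(·)(-d²/dx² + q) with non-real eigenvalue λ, f and f' vanishing at ±∞), one has ∫_ℝ sgn(t)|f(t)|² dt = 0 and ∫_ℝ (|f'(t)|² + q(t)|f(t)|²) dt = 0, i.e. lim_{x→-∞} U(x) = 0 and lim_{x→-∞} V(x) = 0. -/

import Mathlib

/-!
Off the null set `{0}` the eigenvalue equation gives `f'' = q f - λ sgn f`, hence
`(f' f̄)' = |f'|² + q |f|² - λ sgn |f|²` almost everywhere. Integrating over `ℝ`, the boundary
terms `f' f̄` vanish at `±∞`, so `V - λ U = 0` with `U = ∫ sgn |f|²` and `V = ∫ (|f'|² + q |f|²)`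
real. Taking imaginary parts, `Im λ ≠ 0` forces `U = 0`, and then `V = 0`.
-/

open MeasureTheory Filter Topology ComplexConjugate

namespace Real

lemma measurable_sign : Measurable Real.sign :=
  Measurable.ite measurableSet_Iio measurable_const
    (Measurable.ite measurableSet_Ioi measurable_const measurable_const)

lemma norm_sign_le_one (r : ℝ) : ‖Real.sign r‖ ≤ 1 := by
  rcases Real.sign_apply_eq r with h | h | h <;> simp [h]

lemma sign_sq_of_ne_zero {r : ℝ} (hr : r ≠ 0) : Real.sign r ^ 2 = 1 := by
  rcases Real.sign_apply_eq_of_ne_zero r hr with h | h <;> simp [h]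

end Real

lemma MeasureTheory.Integrable.sign_mul {μ : Measure ℝ} {g : ℝ → ℝ} (hg : Integrable g μ) :
    Integrable (fun t => Real.sign t * g t) μ :=
  hg.bdd_mul Real.measurable_sign.aestronglyMeasurable (ae_of_all _ Real.norm_sign_le_one)

lemma hasDerivAt_deriv_mul_conj {f : ℝ → ℂ} (hf : Differentiable ℝ f)
    (hf' : Differentiable ℝ (deriv f)) (t : ℝ) :
    HasDerivAt (fun t => deriv f t * conj (f t))
      (deriv (deriv f) t * conj (f t) + (‖deriv f t‖ ^ 2 : ℝ)) t := by
  rw [Complex.ofReal_pow, ← Complex.mul_conj']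
  exact (hf' t).hasDerivAt.mul (hf t).hasDerivAt.star

lemma tendsto_mul_conj_zero {α : Type*} {l : Filter α} {g f : α → ℂ}
    (hg : Tendsto g l (𝓝 0)) (hf : Tendsto f l (𝓝 0)) :
    Tendsto (fun x => g x * conj (f x)) l (𝓝 0) := by
  simpa using hg.mul hf.star

/-- Multiply the eigenvalue equation by `s * conj z` and use `s² = 1`. -/
lemma mul_conj_add_sq_eq_of_sign_eq {w z v lam : ℂ} {q s : ℝ} (hs : s ^ 2 = 1)
    (heig : (s : ℂ) * (-w + q * z) = lam * z) :
    w * conj z + (‖v‖ ^ 2 : ℝ) = ((‖v‖ ^ 2 + q * ‖z‖ ^ 2 : ℝ) : ℂ) - lam * (s * ‖z‖ ^ 2 : ℝ) := by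
  have hs' : (s : ℂ) ^ 2 = 1 := by exact_mod_cast hs
  push_cast
  rw [← Complex.mul_conj', ← Complex.mul_conj']
  linear_combination (-(s : ℂ) * conj z) * heig + (q * z * conj z - w * conj z) * hs'

lemma eq_zero_and_eq_zero_of_ofReal_sub_mul_ofReal_eq_zero {a b : ℝ} {lam : ℂ}
    (hlam : lam.im ≠ 0) (h : (a : ℂ) - lam * b = 0) : b = 0 ∧ a = 0 := by
  have hb : b = 0 := by
    simpa [hlam] using congrArg Complex.im h
  refine ⟨hb, ?_⟩
  simpa [hb] using congrArg Complex.re h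

theorem U_V_vanish_general (q : ℝ → ℝ)
    (lam : ℂ) (hlam : lam.im ≠ 0) (f : ℝ → ℂ)
    (hf_diff : Differentiable ℝ f) (hf'_diff : Differentiable ℝ (deriv f))
    (hf_L2 : MemLp f 2) (hf'_L2 : MemLp (deriv f) 2)
    (hqf2 : Integrable (fun t => q t * ‖f t‖ ^ 2))
    (hf_top : Tendsto f atTop (𝓝 0)) (hf_bot : Tendsto f atBot (𝓝 0))
    (hf'_top : Tendsto (deriv f) atTop (𝓝 0))
    (hf'_bot : Tendsto (deriv f) atBot (𝓝 0))
    (heig : ∀ᵐ t : ℝ,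
      (Real.sign t : ℂ) * (-(deriv (deriv f) t) + (q t : ℂ) * f t) = lam * f t) :
    (∫ t : ℝ, Real.sign t * ‖f t‖ ^ 2) = 0 ∧
      (∫ t : ℝ, (‖deriv f t‖ ^ 2 + q t * ‖f t‖ ^ 2)) = 0 := by
  have hU : Integrable (fun t => ((Real.sign t * ‖f t‖ ^ 2 : ℝ) : ℂ)) :=
    hf_L2.norm.integrable_sq.sign_mul.ofReal
  have hV : Integrable (fun t => ((‖deriv f t‖ ^ 2 + q t * ‖f t‖ ^ 2 : ℝ) : ℂ)) :=
    (hf'_L2.norm.integrable_sq.add hqf2).ofReal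
  have hlagrange : (fun t => deriv (deriv f) t * conj (f t) + (‖deriv f t‖ ^ 2 : ℝ)) =ᵐ[volume]
      fun t => ((‖deriv f t‖ ^ 2 + q t * ‖f t‖ ^ 2 : ℝ) : ℂ)
        - lam * (Real.sign t * ‖f t‖ ^ 2 : ℝ) := by
    filter_upwards [heig, Measure.ae_ne volume 0] with t ht ht0
    exact mul_conj_add_sq_eq_of_sign_eq (Real.sign_sq_of_ne_zero ht0) ht
  have hzero : ∫ t, ((‖deriv f t‖ ^ 2 + q t * ‖f t‖ ^ 2 : ℝ) : ℂ)
      - lam * (Real.sign t * ‖f t‖ ^ 2 : ℝ) = 0 := by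
    rw [← integral_congr_ae hlagrange, ← sub_self (0 : ℂ)]
    exact integral_of_hasDerivAt_of_tendsto (hasDerivAt_deriv_mul_conj hf_diff hf'_diff)
      ((hV.sub (hU.const_mul lam)).congr hlagrange.symm) (tendsto_mul_conj_zero hf'_bot hf_bot)
      (tendsto_mul_conj_zero hf'_top hf_top)
  rw [integral_sub hV (hU.const_mul lam), integral_const_mul, integral_complex_ofReal,
    integral_complex_ofReal] at hzero
  exact eq_zero_and_eq_zero_of_ofReal_sub_mul_ofReal_eq_zero hlam hzero

/-- For an eigenfunction f of sgn(·)(-d²/dx² + q) with non-real eigenvalue λ,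
vanishing together with f' at ±∞, one has ∫ sgn|f|² = 0 and ∫(|f'|² + q|f|²) = 0. -/
theorem U_V_vanish (q : ℝ → ℝ) (hq : Integrable q)
    (lam : ℂ) (hlam : lam.im ≠ 0) (f : ℝ → ℂ)
    (hf_diff : Differentiable ℝ f) (hf'_diff : Differentiable ℝ (deriv f))
    (hf_L2 : MemLp f 2) (hf'_L2 : MemLp (deriv f) 2)
    (hqf2 : Integrable (fun t => q t * ‖f t‖ ^ 2))
    (hf_top : Tendsto f atTop (𝓝 0)) (hf_bot : Tendsto f atBot (𝓝 0))
    (hf'_top : Tendsto (deriv f) atTop (𝓝 0))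
    (hf'_bot : Tendsto (deriv f) atBot (𝓝 0))
    (heig : ∀ᵐ t : ℝ,
      (Real.sign t : ℂ) * (-(deriv (deriv f) t) + (q t : ℂ) * f t) = lam * f t) :
    (∫ t : ℝ, Real.sign t * ‖f t‖ ^ 2) = 0 ∧
      (∫ t : ℝ, (‖deriv f t‖ ^ 2 + q t * ‖f t‖ ^ 2)) = 0 :=
  U_V_vanish_general q lam hlam f hf_diff hf'_diff hf_L2 hf'_L2 hqf2 hf_top hf_bot hf'_top hf'_bot
    heig
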